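/- arXiv:1903.03693 — 5 statements merged into one kernel-verified Lean document; each statement's English description precedes it below -/
import Mathlib

section
/- There exists a universal constant C > 0 such that the following holds. Let A_1, …, A_n be arcs on the circle ℝ/ℤ (each A_i being the image of a closed bounded interval of ℝ under the quotient map ℝ → ℝ/ℤ). Let k be the maximum, over all points x of the circle, of the number of indices i with x ∈ A_i (the depth of the family), and let α be the maximum cardinality of a set S ⊆ {1,…,n} such that the arcs A_i for i ∈ S are pairwise disjoint (the independence number of the family). Then the number of unordered pairs {i, j} with i ≠ j and A_i ∩ A_j ≠ ∅ is at most C · α · k². -/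
open Set Finset

private lemma coe_add_int' (t : ℝ) (m : ℤ) :
    ((t + m : ℝ) : AddCircle (1:ℝ)) = (t : AddCircle (1:ℝ)) := by
  rw [QuotientAddGroup.eq_iff_sub_mem]
  simp [AddSubgroup.mem_zmultiples_iff]

private lemma coe_sub_int' (t : ℝ) (m : ℤ) :
    ((t - m : ℝ) : AddCircle (1:ℝ)) = (t : AddCircle (1:ℝ)) := by
  have := coe_add_int' (t - m) m
  simpa using this

private lemma exists_int_of_coe_eq {s t : ℝ}
    (h : (s : AddCircle (1:ℝ)) = (t : AddCircle (1:ℝ))) : ∃ m : ℤ, s - t = m := by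
  rw [QuotientAddGroup.eq_iff_sub_mem, AddSubgroup.mem_zmultiples_iff] at h
  obtain ⟨m, hm⟩ := h
  exact ⟨m, by simpa using hm.symm⟩

private lemma image_Icc_shift (u v : ℝ) (m : ℤ) :
    (fun x : ℝ => (x : AddCircle (1:ℝ))) '' Set.Icc (u - m) (v - m)
      = (fun x : ℝ => (x : AddCircle (1:ℝ))) '' Set.Icc u v := by
  ext x
  simp only [Set.mem_image]
  constructor
  · rintro ⟨t, ht, rfl⟩
    exact ⟨t + m, ⟨by linarith [ht.1], by linarith [ht.2]⟩, coe_add_int' t m⟩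
  · rintro ⟨t, ht, rfl⟩
    exact ⟨t - m, ⟨by linarith [ht.1], by linarith [ht.2]⟩, coe_sub_int' t m⟩

private lemma endpoint_mem {n : ℕ} (a b : Fin n → ℝ) (A : Fin n → Set (AddCircle (1:ℝ)))
    (hA : ∀ i, A i = (fun x : ℝ => (x : AddCircle (1:ℝ))) '' Set.Icc (a i) (b i))
    {i j : Fin n} (h : (A i ∩ A j).Nonempty) :
    ((a i : ℝ) : AddCircle (1:ℝ)) ∈ A j ∨ ((a j : ℝ) : AddCircle (1:ℝ)) ∈ A i := by
  obtain ⟨x, hxi, hxj⟩ := h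
  rw [hA i] at hxi
  rw [hA j] at hxj
  obtain ⟨t, ht, rfl⟩ := hxi
  obtain ⟨s, hs, hst⟩ := hxj
  obtain ⟨m, hm⟩ := exists_int_of_coe_eq hst
  by_cases hc : a j ≤ a i + m
  · left
    rw [hA j]
    exact ⟨a i + m, ⟨hc, by linarith [ht.1, hs.2]⟩, coe_add_int' _ _⟩
  · right
    rw [hA i]
    push_neg at hc
    exact ⟨a j - m, ⟨by linarith, by linarith [hs.1, ht.2]⟩, coe_sub_int' _ _⟩

lemma greedy_intervals (k : ℕ) : ∀ (β n : ℕ) (a b : Fin n → ℝ), (∀ i, a i ≤ b i) →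
    ∀ (S : Finset (Fin n)),
    (∀ t : ℝ, (S.filter (fun i => t ∈ Set.Icc (a i) (b i))).card ≤ k) →
    (∀ T : Finset (Fin n), T ⊆ S →
      (∀ i ∈ T, ∀ j ∈ T, i ≠ j → Disjoint (Set.Icc (a i) (b i)) (Set.Icc (a j) (b j))) →
      T.card ≤ β) →
    S.card ≤ β * k := by
  intro β
  induction β with
  | zero =>
    intro n a b hab S hdepth hind
    by_contra h
    push_neg at h
    rw [Nat.zero_mul] at h
    obtain ⟨i, hi⟩ := Finset.card_pos.mp h
    have := hind {i} (by simpa using hi) (by simp)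
    simp at this
  | succ β ih =>
    intro n a b hab S hdepth hind
    classical
    rcases S.eq_empty_or_nonempty with rfl | hS
    · simp
    obtain ⟨i, hiS, hmin⟩ := S.exists_min_image b hS
    set N := S.filter (fun j => ¬ Disjoint (Set.Icc (a j) (b j)) (Set.Icc (a i) (b i))) with hN
    have hNsub : N ⊆ S.filter (fun j => b i ∈ Set.Icc (a j) (b j)) := by
      intro j hj
      rw [hN, Finset.mem_filter] at hj
      obtain ⟨hjS, hnd⟩ := hj
      obtain ⟨t, ht1, ht2⟩ := Set.not_disjoint_iff.mp hnd
      refine Finset.mem_filter.mpr ⟨hjS, ⟨le_trans ht1.1 ht2.2, ?_⟩⟩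
      simpa using hmin j hjS
    have hNk : N.card ≤ k := le_trans (Finset.card_le_card hNsub) (hdepth (b i))
    have hiN : i ∈ N := by
      rw [hN, Finset.mem_filter]
      exact ⟨hiS, Set.not_disjoint_iff.mpr ⟨b i, ⟨hab i, le_rfl⟩, ⟨hab i, le_rfl⟩⟩⟩
    set S' := S \ N with hS'
    have hS'card : S'.card ≤ β * k := by
      apply ih n a b hab S'
      · intro t
        exact le_trans (Finset.card_le_card (Finset.filter_subset_filter _ (Finset.sdiff_subset))) (hdepth t)
      · intro T hT hTd
        have hiT : i ∉ T := fun h => (Finset.mem_sdiff.mp (hT h)).2 hiN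
        have : (insert i T).card ≤ β + 1 := by
          apply hind
          · intro x hx
            rcases Finset.mem_insert.mp hx with rfl | hx
            · exact hiS
            · exact (Finset.mem_sdiff.mp (hT hx)).1
          · intro x hx y hy hxy
            rcases Finset.mem_insert.mp hx with hxi | hx <;>
              rcases Finset.mem_insert.mp hy with hyi | hy
            · exact absurd (hxi.trans hyi.symm) hxy
            · rw [hxi]
              have := (Finset.mem_sdiff.mp (hT hy)).2
              rw [hN, Finset.mem_filter] at this
              have hd : Disjoint (Set.Icc (a y) (b y)) (Set.Icc (a i) (b i)) := by
                by_contra hc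
                exact this ⟨(Finset.mem_sdiff.mp (hT hy)).1, hc⟩
              exact hd.symm
            · rw [hyi]
              have := (Finset.mem_sdiff.mp (hT hx)).2
              rw [hN, Finset.mem_filter] at this
              by_contra hc
              exact this ⟨(Finset.mem_sdiff.mp (hT hx)).1, hc⟩
            · exact hTd x hx y hy hxy
        rw [Finset.card_insert_of_notMem hiT] at this
        omega
    have : S.card ≤ S'.card + N.card := by
      rw [hS', Finset.card_sdiff_add_card_eq_card (Finset.filter_subset _ _)]
    calc S.card ≤ S'.card + N.card := this
    _ ≤ β * k + k := by omega
    _ = (β + 1) * k := by ring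


/-- There is a universal constant `C > 0` such that for any finite
family of arcs on the circle `ℝ/ℤ` (images of closed bounded intervals under the
quotient map), with depth `k` (the maximum number of arcs containing a common point)
and independence number `α` (the maximum number of pairwise disjoint arcs), the
number of intersecting pairs of arcs is at most `C · α · k²`. -/
theorem stmt_0 :
    ∃ C : ℝ, 0 < C ∧
      ∀ (n : ℕ) (a b : Fin n → ℝ) (A : Fin n → Set (AddCircle (1 : ℝ))),
        (∀ i, a i ≤ b i) →
        (∀ i, A i = (fun x : ℝ => (x : AddCircle (1 : ℝ))) '' Set.Icc (a i) (b i)) →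
        ∀ k α : ℕ,
          IsGreatest {m : ℕ | ∃ x : AddCircle (1 : ℝ), m = {i : Fin n | x ∈ A i}.ncard} k →
          IsGreatest {m : ℕ | ∃ S : Set (Fin n), m = S.ncard ∧
              S.Pairwise fun i j => Disjoint (A i) (A j)} α →
          ({p : Fin n × Fin n | p.1 < p.2 ∧ (A p.1 ∩ A p.2).Nonempty}.ncard : ℝ)
            ≤ C * (α : ℝ) * (k : ℝ) ^ 2 := by
  classical
  refine ⟨2, by norm_num, ?_⟩
  intro n a b A hab hA k α hk hα
  have hdepthF : ∀ x : AddCircle (1:ℝ),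
      (Finset.univ.filter (fun i => x ∈ A i)).card ≤ k := by
    intro x
    have := hk.2 ⟨x, rfl⟩
    rwa [Set.ncard_eq_toFinset_card', Set.toFinset_setOf] at this
  set E : Set (Fin n × Fin n) :=
    {p : Fin n × Fin n | p.1 < p.2 ∧ (A p.1 ∩ A p.2).Nonempty} with hE
  -- Step A : E.ncard ≤ n * k
  have stepA : E.ncard ≤ n * k := by
    set T' : Set (Fin n × Fin n) :=
      {p | p.1 ≠ p.2 ∧ ((a p.1 : ℝ) : AddCircle (1:ℝ)) ∈ A p.2} with hT'
    have hET : E.ncard ≤ T'.ncard := by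
      apply Set.ncard_le_ncard_of_injOn
        (fun p => if ((a p.1 : ℝ) : AddCircle (1:ℝ)) ∈ A p.2 then p else (p.2, p.1))
      · intro p hp
        rw [hE, Set.mem_setOf_eq] at hp
        by_cases h : ((a p.1 : ℝ) : AddCircle (1:ℝ)) ∈ A p.2
        · rw [if_pos h]
          exact ⟨hp.1.ne, h⟩
        · rw [if_neg h]
          rcases endpoint_mem a b A hA hp.2 with h' | h'
          · exact absurd h' h
          · exact ⟨hp.1.ne', h'⟩
      · intro p hp q hq hpq
        rw [hE, Set.mem_setOf_eq] at hp hq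
        simp only at hpq
        by_cases h1 : ((a p.1 : ℝ) : AddCircle (1:ℝ)) ∈ A p.2 <;>
          by_cases h2 : ((a q.1 : ℝ) : AddCircle (1:ℝ)) ∈ A q.2
        · rwa [if_pos h1, if_pos h2] at hpq
        · rw [if_pos h1, if_neg h2] at hpq
          have e1 : p.1 = q.2 := congrArg Prod.fst hpq
          have e2 : p.2 = q.1 := congrArg Prod.snd hpq
          exact absurd (e2 ▸ e1 ▸ hp.1) (asymm hq.1)
        · rw [if_neg h1, if_pos h2] at hpq
          have e1 : p.2 = q.1 := congrArg Prod.fst hpq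
          have e2 : p.1 = q.2 := congrArg Prod.snd hpq
          exact absurd (e2 ▸ e1 ▸ hq.1) (asymm hp.1)
        · rw [if_neg h1, if_neg h2] at hpq
          have e1 : p.2 = q.2 := congrArg Prod.fst hpq
          have e2 : p.1 = q.1 := congrArg Prod.snd hpq
          exact Prod.ext e2 e1
    have hT'card : T'.ncard ≤ n * k := by
      rw [hT', Set.ncard_eq_toFinset_card', Set.toFinset_setOf]
      have hsub : (Finset.univ.filter
          (fun p : Fin n × Fin n => p.1 ≠ p.2 ∧ ((a p.1 : ℝ) : AddCircle (1:ℝ)) ∈ A p.2))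
          ⊆ Finset.univ.biUnion (fun i =>
            (Finset.univ.filter (fun j => ((a i : ℝ) : AddCircle (1:ℝ)) ∈ A j)).image
              (fun j => (i, j))) := by
        intro p hp
        rw [Finset.mem_filter] at hp
        refine Finset.mem_biUnion.mpr ⟨p.1, Finset.mem_univ _, Finset.mem_image.mpr
          ⟨p.2, Finset.mem_filter.mpr ⟨Finset.mem_univ _, hp.2.2⟩, rfl⟩⟩
      calc _ ≤ _ := Finset.card_le_card hsub
      _ ≤ ∑ i : Fin n, ((Finset.univ.filter
            (fun j => ((a i : ℝ) : AddCircle (1:ℝ)) ∈ A j)).image (fun j => (i, j))).card :=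
          Finset.card_biUnion_le
      _ ≤ ∑ i : Fin n, k := by
          apply Finset.sum_le_sum
          intro i _
          exact le_trans Finset.card_image_le (hdepthF _)
      _ = n * k := by simp [Finset.sum_const, Finset.card_univ]
    exact le_trans hET hT'card
  -- Step B : n ≤ k + α * k  (for n > 0)
  rcases Nat.eq_zero_or_pos n with rfl | hn
  · have : E = ∅ := Set.eq_empty_of_isEmpty E
    rw [this]
    simp only [Set.ncard_empty, Nat.cast_zero]
    positivity
  have stepB : n ≤ k + α * k := by
    set i0 : Fin n := ⟨0, hn⟩ with hi0
    set x0 : AddCircle (1:ℝ) := ((a i0 : ℝ) : AddCircle (1:ℝ)) with hx0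
    set a' : Fin n → ℝ := fun i => a i - ⌊a i - a i0⌋ with ha'
    set b' : Fin n → ℝ := fun i => b i - ⌊a i - a i0⌋ with hb'
    have hab' : ∀ i, a' i ≤ b' i := fun i => by
      simp only [ha', hb']; linarith [hab i]
    have hA' : ∀ i, A i = (fun x : ℝ => (x : AddCircle (1:ℝ))) '' Set.Icc (a' i) (b' i) :=
      fun i => by rw [ha', hb']; simp only []; rw [image_Icc_shift, ← hA i]
    have ha'lb : ∀ i, a i0 ≤ a' i := by
      intro i
      simp only [ha']
      have h1 := Int.floor_le (a i - a i0)
      linarith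
    have ha'ub : ∀ i, a' i < a i0 + 1 := by
      intro i
      simp only [ha']
      have := Int.lt_floor_add_one (a i - a i0)
      linarith
    -- arcs avoiding x0 have intervals inside (a i0, a i0 + 1)
    have hinside : ∀ i, x0 ∉ A i →
        a i0 < a' i ∧ b' i < a i0 + 1 := by
      intro i hi
      constructor
      · rcases lt_or_eq_of_le (ha'lb i) with h | h
        · exact h
        · exfalso
          apply hi
          rw [hA' i]
          exact ⟨a' i, ⟨le_rfl, hab' i⟩, by rw [hx0, ← h]⟩
      · by_contra hcon
        push_neg at hcon
        apply hi
        rw [hA' i]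
        refine ⟨a i0 + 1, ⟨le_trans (le_of_lt (ha'ub i)) le_rfl |>.trans le_rfl, hcon⟩, ?_⟩
        · have : ((a i0 + ((1:ℤ):ℝ) : ℝ) : AddCircle (1:ℝ)) = ((a i0 : ℝ) : AddCircle (1:ℝ)) :=
            coe_add_int' (a i0) 1
          rw [hx0]
          simpa using this
      -- note: first component needs a' i ≤ a i0 + 1 which follows from ha'ub
    set D : Finset (Fin n) := Finset.univ.filter (fun i => x0 ∈ A i) with hD
    have hDk : D.card ≤ k := hdepthF x0
    set S : Finset (Fin n) := Finset.univ \ D with hS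
    have hSmem : ∀ i ∈ S, x0 ∉ A i := by
      intro i hi
      rw [hS, Finset.mem_sdiff, hD, Finset.mem_filter] at hi
      exact fun h => hi.2 ⟨Finset.mem_univ _, h⟩
    have hScard : S.card ≤ α * k := by
      apply greedy_intervals k α n a' b' hab' S
      · intro t
        refine le_trans (Finset.card_le_card ?_) (hdepthF ((t : ℝ) : AddCircle (1:ℝ)))
        intro i hi
        rw [Finset.mem_filter] at hi
        refine Finset.mem_filter.mpr ⟨Finset.mem_univ _, ?_⟩
        rw [hA' i]
        exact ⟨t, hi.2, rfl⟩
      · intro T hT hTd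
        have hpair : (↑T : Set (Fin n)).Pairwise (fun i j => Disjoint (A i) (A j)) := by
          intro i hi j hj hij
          have hdisj := hTd i (Finset.mem_coe.mp hi) j (Finset.mem_coe.mp hj) hij
          rw [Set.disjoint_left]
          intro x hxi hxj
          rw [hA' i] at hxi
          rw [hA' j] at hxj
          obtain ⟨t, ht, rfl⟩ := hxi
          obtain ⟨s, hs, hst⟩ := hxj
          obtain ⟨m, hm⟩ := exists_int_of_coe_eq hst
          have hIi := hinside i (hSmem i (hT (Finset.mem_coe.mp hi)))
          have hIj := hinside j (hSmem j (hT (Finset.mem_coe.mp hj)))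
          have htint : a i0 < t ∧ t < a i0 + 1 :=
            ⟨lt_of_lt_of_le hIi.1 ht.1, lt_of_le_of_lt ht.2 hIi.2⟩
          have hsint : a i0 < s ∧ s < a i0 + 1 :=
            ⟨lt_of_lt_of_le hIj.1 hs.1, lt_of_le_of_lt hs.2 hIj.2⟩
          have hm0 : m = 0 := by
            have h1 : (-1 : ℝ) < (m : ℝ) := by rw [← hm]; linarith
            have h2 : (m : ℝ) < 1 := by rw [← hm]; linarith
            have h1' : (-1 : ℤ) < m := by exact_mod_cast h1
            have h2' : m < 1 := by exact_mod_cast h2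
            omega
          have hst' : s = t := by
            have := hm
            rw [hm0] at this
            simpa [sub_eq_zero] using this
          rw [hst'] at hs
          exact Set.disjoint_left.mp hdisj ht hs
        have hmem : T.card ∈ {m : ℕ | ∃ S : Set (Fin n), m = S.ncard ∧
            S.Pairwise fun i j => Disjoint (A i) (A j)} :=
          ⟨↑T, (Set.ncard_coe_finset T).symm, hpair⟩
        exact hα.2 hmem
    have : S.card + D.card = n := by
      rw [hS, Finset.card_sdiff_add_card_eq_card (Finset.subset_univ D), Finset.card_univ,
        Fintype.card_fin]
    omega
  -- α ≥ 1
  have hα1 : 1 ≤ α := by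
    apply hα.2
    refine ⟨{⟨0, hn⟩}, ?_, Set.pairwise_singleton _ _⟩
    simp
  -- combine
  have hfinal : E.ncard ≤ 2 * α * k ^ 2 := by
    calc E.ncard ≤ n * k := stepA
    _ ≤ (k + α * k) * k := Nat.mul_le_mul_right k stepB
    _ = k * k + α * (k * k) := by ring
    _ ≤ α * (k * k) + α * (k * k) := by
        have : k * k ≤ α * (k * k) := Nat.le_mul_of_pos_left _ hα1
        omega
    _ = 2 * α * k ^ 2 := by ring
  calc (E.ncard : ℝ) ≤ ((2 * α * k ^ 2 : ℕ) : ℝ) := by exact_mod_cast hfinal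
  _ = 2 * (α : ℝ) * (k : ℝ) ^ 2 := by push_cast; ring
end

section
/- Let K ⊆ ℝ² be a convex set, let H_1, …, H_m be closed halfplanes with K ⊆ F, where F = H_1 ∩ ⋯ ∩ H_m, and let R ⊆ ℝ² be a finite set with R ∩ F = ∅ such that for every two distinct points p, q ∈ R the closed segment [p, q] intersects the interior of K (i.e., no two points of R are mutually visible with respect to K). Then |R| ≤ m. -/
/-- Let `K ⊆ ℝ²` be convex, `H₁, …, H_m` closed halfplanes whose
intersection `F` contains `K`, and `R` a finite set disjoint from `F` such that no two
distinct points of `R` are mutually visible with respect to `K` (every segment between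
two distinct points of `R` meets the interior of `K`). Then `|R| ≤ m`. -/
theorem stmt_5 (K : Set (EuclideanSpace ℝ (Fin 2))) (hK : Convex ℝ K)
    (m : ℕ) (v : Fin m → EuclideanSpace ℝ (Fin 2)) (a : Fin m → ℝ)
    (hv : ∀ i, v i ≠ 0)
    (F : Set (EuclideanSpace ℝ (Fin 2)))
    (hF : F = ⋂ i, {x : EuclideanSpace ℝ (Fin 2) | (inner ℝ (v i) x : ℝ) ≤ a i})
    (hKF : K ⊆ F)
    (R : Set (EuclideanSpace ℝ (Fin 2))) (hRfin : R.Finite) (hRF : R ∩ F = ∅)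
    (hvis : ∀ p ∈ R, ∀ q ∈ R, p ≠ q → (segment ℝ p q ∩ interior K).Nonempty) :
    R.ncard ≤ m := by
  classical
  have hex : ∀ p ∈ R, ∃ i, a i < (inner ℝ (v i) p : ℝ) := by
    intro p hp
    by_contra h
    push_neg at h
    have hpF : p ∈ F := by
      rw [hF]; exact Set.mem_iInter.2 fun i => h i
    have : p ∈ R ∩ F := ⟨hp, hpF⟩
    rw [hRF] at this
    exact this
  rcases Nat.eq_zero_or_pos m with hm | hm
  · have hRe : R = ∅ := by
      apply Set.eq_empty_iff_forall_notMem.2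
      intro p hp
      obtain ⟨i, _⟩ := hex p hp
      exact absurd i.isLt (by omega)
    simp [hRe, hm]
  · have : Inhabited (Fin m) := ⟨⟨0, hm⟩⟩
    set f : EuclideanSpace ℝ (Fin 2) → Fin m := fun p =>
      if h : ∃ i, a i < (inner ℝ (v i) p : ℝ) then h.choose else default with hfdef
    have hf : ∀ p ∈ R, a (f p) < (inner ℝ (v (f p)) p : ℝ) := by
      intro p hp
      have h := hex p hp
      simp only [hfdef, dif_pos h]
      exact h.choose_spec
    have hinj : Set.InjOn f R := by
      intro p hp q hq hpq
      by_contra hne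
      obtain ⟨x, hxseg, hxK⟩ := hvis p hp q hq hne
      have hxF : x ∈ F := hKF (interior_subset hxK)
      have hle : (inner ℝ (v (f p)) x : ℝ) ≤ a (f p) := by
        rw [hF] at hxF
        exact Set.mem_iInter.1 hxF (f p)
      obtain ⟨s, t, hs, ht, hst, hx⟩ := hxseg
      have hp' : a (f p) < (inner ℝ (v (f p)) p : ℝ) := hf p hp
      have hq' : a (f p) < (inner ℝ (v (f p)) q : ℝ) := by
        have := hf q hq; rwa [← hpq] at this
      have hxin : (inner ℝ (v (f p)) x : ℝ)
          = s * (inner ℝ (v (f p)) p : ℝ) + t * (inner ℝ (v (f p)) q : ℝ) := by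
        rw [← hx]
        simp [inner_add_right, real_inner_smul_right]
      rcases eq_or_lt_of_le hs with h0 | h0
      · have ht1 : t = 1 := by linarith
        rw [hxin, ← h0, ht1] at hle
        linarith
      · have ha : s * a (f p) + t * a (f p) = a (f p) := by
          rw [← add_mul, hst, one_mul]
        linarith [mul_le_mul_of_nonneg_left (le_of_lt hq') ht,
          mul_lt_mul_of_pos_left hp' h0]
    calc R.ncard ≤ (Set.univ : Set (Fin m)).ncard :=
          Set.ncard_le_ncard_of_injOn f (fun p _ => Set.mem_univ _) hinj
            (Set.finite_univ)
      _ = m := by simp [Set.ncard_univ]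
end

section
/- Let B ⊆ ℝ^d be a convex set and let X be a finite set of points with X ∩ B = ∅ such that for every two distinct points p, q ∈ X the closed segment [p, q] intersects the interior of B (i.e., no two points of X are mutually visible with respect to B). Then X is in convex position: for every x ∈ X, the point x does not lie in the convex hull of X \ {x}. -/
/-- Let `B ⊆ ℝ^d` be convex and `X` a finite set of points disjoint
from `B` such that no two distinct points of `X` are mutually visible with respect to
`B` (every segment between two distinct points of `X` meets the interior of `B`).
Then `X` is in convex position: no `x ∈ X` lies in the convex hull of `X \ {x}`. -/
theorem stmt_6 (d : ℕ) (B : Set (EuclideanSpace ℝ (Fin d))) (hB : Convex ℝ B)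
    (X : Set (EuclideanSpace ℝ (Fin d))) (hX : X.Finite) (hXB : X ∩ B = ∅)
    (hvis : ∀ p ∈ X, ∀ q ∈ X, p ≠ q → (segment ℝ p q ∩ interior B).Nonempty) :
    ∀ x ∈ X, x ∉ convexHull ℝ (X \ {x}) := by
  intro x hx hcon
  have hxB : x ∉ B := fun h => (Set.eq_empty_iff_forall_notMem.1 hXB x) ⟨hx, h⟩
  rw [convexHull_eq] at hcon
  obtain ⟨ι, t, w, z, hw0, hw1, hz, hcm⟩ := hcon
  have key : ∀ i : ι, ∃ ab : ℝ × ℝ, 0 ≤ ab.1 ∧ 0 < ab.2 ∧ ab.1 + ab.2 = 1 ∧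
      (i ∈ t → ab.1 • x + ab.2 • z i ∈ interior B) := by
    intro i
    by_cases hi : i ∈ t
    · obtain ⟨hziX, hzix⟩ := hz i hi
      have hne : x ≠ z i := fun h => hzix (Set.mem_singleton_iff.mpr h.symm)
      obtain ⟨p, hp, hpB⟩ := hvis x hx (z i) hziX hne
      obtain ⟨aa, bb, ha', hb', hab', hp'⟩ := hp
      have hbpos : 0 < bb := by
        rcases hb'.lt_or_eq with h | h
        · exact h
        · exfalso
          apply hxB
          have hpx : p = x := by
            have haa : aa = 1 := by linarith
            rw [← hp', ← h, haa]
            simp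
          exact interior_subset (hpx ▸ hpB)
      exact ⟨(aa, bb), ha', hbpos, hab', fun _ => hp' ▸ hpB⟩
    · exact ⟨(0, 1), le_refl 0, one_pos, by ring, fun h => absurd h hi⟩
  choose ab ha hbpos habs hmem using key
  set a : ι → ℝ := fun i => (ab i).1 with haDef
  set b : ι → ℝ := fun i => (ab i).2 with hbDef
  set w' : ι → ℝ := fun i => w i / b i with hw'
  set P : ι → EuclideanSpace ℝ (Fin d) := fun i => a i • x + b i • z i with hP
  have hble : ∀ i, b i ≤ 1 := fun i => by have h1 := ha i; have h2 := habs i; linarith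
  have hw'0 : ∀ i ∈ t, 0 ≤ w' i := fun i hi => div_nonneg (hw0 i hi) (hbpos i).le
  have hwle : ∀ i ∈ t, w i ≤ w' i := by
    intro i hi
    rw [hw']
    rw [le_div_iff₀ (hbpos i)]
    exact mul_le_of_le_one_right (hw0 i hi) (hble i)
  have hS1 : (1:ℝ) ≤ ∑ i ∈ t, w' i := by
    rw [← hw1]; exact Finset.sum_le_sum hwle
  have hSpos : 0 < ∑ i ∈ t, w' i := lt_of_lt_of_le one_pos hS1
  have hmemhull : t.centerMass w' P ∈ convexHull ℝ (interior B) :=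
    Finset.centerMass_mem_convexHull t hw'0 hSpos (fun i hi => hmem i hi)
  have hsum : ∑ i ∈ t, w i • z i = x := by
    rw [← hcm, Finset.centerMass, hw1, inv_one, one_smul]
  have hcmx : t.centerMass w' P = x := by
    rw [Finset.centerMass]
    have hkey : ∑ i ∈ t, w' i • P i = (∑ i ∈ t, w' i) • x := by
      have h1 : ∀ i ∈ t, w' i • P i = (w' i - w i) • x + w i • z i := by
        intro i hi
        have hbne := (hbpos i).ne'
        have h2 : w' i * b i = w i := by show w i / b i * b i = w i; exact div_mul_cancel₀ (w i) hbne
        have h3 : w' i * a i = w' i - w i := by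
          have h4 := habs i
          have h5 : a i = 1 - b i := by linarith
          rw [h5, mul_sub, mul_one, h2]
        rw [hP]
        simp only [smul_add, smul_smul, h2, h3]
      rw [Finset.sum_congr rfl h1, Finset.sum_add_distrib, ← Finset.sum_smul, hsum,
        Finset.sum_sub_distrib, hw1, sub_smul, one_smul]
      abel
    rw [hkey, smul_smul, inv_mul_cancel₀ hSpos.ne', one_smul]
  rw [hcmx, (hB.interior).convexHull_eq] at hmemhull
  exact hxB (interior_subset hmemhull)
end

section
/- Let B ⊆ ℝ³ be a compact convex set with nonempty interior and let p, q ∈ ℝ³ be distinct points such that the line through p and q is disjoint from B. Then there are exactly two unit vectors v ∈ ℝ³ satisfying ⟨v, p⟩ = ⟨v, q⟩ = h_B(v); equivalently, exactly two planes containing the line through p and q support B. -/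
open Real Set
open scoped RealInnerProductSpace

local notation "E3" => EuclideanSpace ℝ (Fin 3)

/-- Four pairwise-orthogonal vectors in `ℝ³`, the first three of unit norm:
the fourth must vanish. -/
lemma aux_orth4 (d u w z : E3) (hd : ‖d‖ = 1) (hu : ‖u‖ = 1) (hw : ‖w‖ = 1)
    (hdu : ⟪d, u⟫ = 0) (hdw : ⟪d, w⟫ = 0) (huw : ⟪u, w⟫ = 0)
    (hzd : ⟪d, z⟫ = 0) (hzu : ⟪u, z⟫ = 0) (hzw : ⟪w, z⟫ = 0) :
    z = 0 := by
  by_contra hz0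
  set zh : E3 := ‖z‖⁻¹ • z with hzh
  have hznorm : ‖zh‖ = 1 := by
    rw [hzh, norm_smul, norm_inv, norm_norm, inv_mul_cancel₀ (norm_ne_zero_iff.2 hz0)]
  have hinz : ∀ x : E3, ⟪x, z⟫ = 0 → ⟪x, zh⟫ = 0 := by
    intro x hx
    rw [hzh, real_inner_smul_right, hx, mul_zero]
  have hzdh := hinz _ hzd
  have hzuh := hinz _ hzu
  have hzwh := hinz _ hzw
  have horth : Orthonormal ℝ ![d, u, w, zh] := by
    constructor
    · intro i
      fin_cases i <;> simpa
    · intro i j hij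
      fin_cases i <;> fin_cases j <;>
        simp only [Matrix.cons_val_zero, Matrix.cons_val_one, Matrix.head_cons,
          Matrix.cons_val_two, Matrix.tail_cons, Matrix.cons_val_three, ne_eq] at hij ⊢ <;>
        first
          | exact absurd rfl hij
          | exact absurd trivial hij
          | assumption
          | (rw [real_inner_comm]; assumption)
  have hli := horth.linearIndependent
  have := hli.fintype_card_le_finrank
  rw [finrank_euclideanSpace] at this
  simp at this

set_option maxHeartbeats 1000000 in
/-- Let `B ⊆ ℝ³` be a compact convex set with nonempty interior and
`p ≠ q` points such that the line through `p` and `q` is disjoint from `B`. Then there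
are exactly two unit vectors `v` with `⟨v,p⟩ = ⟨v,q⟩ = h_B(v)`, where
`h_B(v) = sup_{b ∈ B} ⟨v,b⟩` is the support function of `B`; equivalently, exactly two
planes containing the line through `p` and `q` support `B`. -/
theorem stmt_7 (B : Set (EuclideanSpace ℝ (Fin 3))) (hBc : IsCompact B)
    (hBconv : Convex ℝ B) (hBint : (interior B).Nonempty)
    (p q : EuclideanSpace ℝ (Fin 3)) (hpq : p ≠ q)
    (hline : Disjoint
      ((affineSpan ℝ {p, q} : AffineSubspace ℝ (EuclideanSpace ℝ (Fin 3))) :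
        Set (EuclideanSpace ℝ (Fin 3))) B) :
    {v : EuclideanSpace ℝ (Fin 3) | ‖v‖ = 1 ∧
        (inner ℝ v p : ℝ) = sSup ((fun b => (inner ℝ v b : ℝ)) '' B) ∧
        (inner ℝ v q : ℝ) = sSup ((fun b => (inner ℝ v b : ℝ)) '' B)}.ncard = 2 := by
  classical
  have hπ : (0:ℝ) < π := Real.pi_pos
  obtain ⟨x₀, hx₀⟩ := hBint
  have hx₀B : x₀ ∈ B := interior_subset hx₀
  have hBne : B.Nonempty := ⟨x₀, hx₀B⟩
  set d : E3 := p - q with hd_def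
  have hd0 : d ≠ 0 := sub_ne_zero.2 hpq
  have hdn : ‖d‖ ≠ 0 := norm_ne_zero_iff.2 hd0
  -- the line through p and q, and its disjointness from B
  have hLmem : ∀ t : ℝ, p + t • d ∈ (affineSpan ℝ {p, q} :
      AffineSubspace ℝ (EuclideanSpace ℝ (Fin 3))) := by
    intro t
    have hp : p ∈ affineSpan ℝ ({p, q} : Set E3) :=
      subset_affineSpan ℝ _ (Set.mem_insert _ _)
    have hq : q ∈ affineSpan ℝ ({p, q} : Set E3) :=
      subset_affineSpan ℝ _ (Set.mem_insert_of_mem _ rfl)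
    have := AffineSubspace.smul_vsub_vadd_mem (affineSpan ℝ ({p, q} : Set E3)) t hp hq hp
    simpa [vsub_eq_sub, vadd_eq_add, hd_def, add_comm] using this
  have hLB : ∀ t : ℝ, p + t • d ∉ B := by
    intro t hb
    exact Set.disjoint_left.mp hline (hLmem t) hb
  -- separating functional
  obtain ⟨f, s₁, s₂, hfB, hs12, hfL⟩ :=
    geometric_hahn_banach_compact_closed hBconv hBc
      (AffineSubspace.convex _)
      (AffineSubspace.closed_of_finiteDimensional _) hline.symm
  set u₀ : E3 := (InnerProductSpace.toDual ℝ E3).symm f with hu₀def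
  have hu₀ : ∀ x : E3, ⟪u₀, x⟫ = f x := fun x => InnerProductSpace.toDual_symm_apply
  have hfpq : f p = f q := by
    by_contra hne
    have hL := hfL (p + ((s₂ - 1 - f p)/(f p - f q)) • d) (hLmem _)
    rw [map_add, map_smul] at hL
    have hfd : f d = f p - f q := by rw [hd_def, map_sub]
    rw [hfd] at hL
    have hc : f p - f q ≠ 0 := sub_ne_zero.2 hne
    rw [smul_eq_mul, div_mul_cancel₀ _ hc] at hL
    linarith
  have hu₀d : ⟪u₀, d⟫ = 0 := by
    rw [hu₀, hd_def, map_sub, hfpq, sub_self]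
  have hfp : s₂ < f p := hfL p (subset_affineSpan ℝ _ (Set.mem_insert _ _))
  have hu₀0 : u₀ ≠ 0 := by
    intro h0
    have h1 := hfB x₀ hx₀B
    have h2 : f x₀ = 0 := by rw [← hu₀, h0, inner_zero_left]
    have h3 : f p = 0 := by rw [← hu₀, h0, inner_zero_left]
    linarith
  have hru : (0:ℝ) < ‖u₀‖⁻¹ := inv_pos.2 (norm_pos_iff.2 hu₀0)
  set u : E3 := ‖u₀‖⁻¹ • u₀ with hu_def
  have hu1 : ‖u‖ = 1 := by
    rw [hu_def, norm_smul, norm_inv, norm_norm, inv_mul_cancel₀ (norm_ne_zero_iff.2 hu₀0)]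
  have hud : ⟪u, d⟫ = 0 := by
    rw [hu_def, real_inner_smul_left, hu₀d, mul_zero]
  set m : ℝ := ‖u₀‖⁻¹ * (s₂ - s₁) with hm_def
  have hmpos : 0 < m := mul_pos hru (by linarith)
  have huB : ∀ b ∈ B, ⟪u, b - p⟫ ≤ -m := by
    intro b hb
    have h1 : ⟪u₀, b - p⟫ ≤ -(s₂ - s₁) := by
      rw [inner_sub_right, hu₀, hu₀]
      have := hfB b hb
      linarith
    have h2 : ⟪u, b - p⟫ = ‖u₀‖⁻¹ * ⟪u₀, b - p⟫ := by
      rw [hu_def, real_inner_smul_left]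
    rw [h2, hm_def]
    calc ‖u₀‖⁻¹ * ⟪u₀, b - p⟫ ≤ ‖u₀‖⁻¹ * (-(s₂ - s₁)) :=
          mul_le_mul_of_nonneg_left h1 (le_of_lt hru)
      _ = -(‖u₀‖⁻¹ * (s₂ - s₁)) := by ring
  clear_value u
  -- a third orthogonal direction w
  obtain ⟨w, hw1, hwu, hwd⟩ : ∃ w : E3, ‖w‖ = 1 ∧ ⟪u, w⟫ = 0 ∧ ⟪d, w⟫ = 0 := by
    set T := (Submodule.span ℝ ({u, d} : Set E3))ᗮ with hT
    have hTne : T ≠ ⊥ := by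
      intro hbot
      have htop : Submodule.span ℝ ({u, d} : Set E3) = ⊤ :=
        Submodule.orthogonal_eq_bot_iff.mp hbot
      have h1 : Module.finrank ℝ (Submodule.span ℝ ({u, d} : Set E3)) ≤ 2 := by
        have h2 := finrank_span_le_card (R := ℝ) ({u, d} : Set E3)
        have h3 : ({u, d} : Set E3).toFinset.card ≤ 2 := by
          rw [Set.toFinset_insert, Set.toFinset_singleton]
          exact Finset.card_insert_le _ _
        omega
      rw [htop, finrank_top, finrank_euclideanSpace] at h1
      simp at h1
    obtain ⟨w₀, hw₀T, hw₀0⟩ := Submodule.exists_mem_ne_zero_of_ne_bot hTne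
    refine ⟨‖w₀‖⁻¹ • w₀, ?_, ?_, ?_⟩
    · rw [norm_smul, norm_inv, norm_norm, inv_mul_cancel₀ (norm_ne_zero_iff.2 hw₀0)]
    · have := hw₀T u (Submodule.subset_span (Set.mem_insert _ _))
      rw [real_inner_smul_right, this, mul_zero]
    · have := hw₀T d (Submodule.subset_span (Set.mem_insert_of_mem _ rfl))
      rw [real_inner_smul_right, this, mul_zero]
  -- the circle of candidate directions
  set V : ℝ → E3 := fun θ => cos θ • u + sin θ • w with hV_def
  have huu : ⟪u, u⟫ = 1 := by
    rw [real_inner_self_eq_norm_sq, hu1]; norm_num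
  have hww : ⟪w, w⟫ = 1 := by
    rw [real_inner_self_eq_norm_sq, hw1]; norm_num
  have hVin : ∀ θ (x : E3), ⟪V θ, x⟫ = cos θ * ⟪u, x⟫ + sin θ * ⟪w, x⟫ := by
    intro θ x
    show ⟪cos θ • u + sin θ • w, x⟫ = _
    rw [inner_add_left, real_inner_smul_left, real_inner_smul_left]
  have hVu : ∀ θ, ⟪u, V θ⟫ = cos θ := by
    intro θ
    show ⟪u, cos θ • u + sin θ • w⟫ = _
    rw [inner_add_right, real_inner_smul_right, real_inner_smul_right, huu, hwu]
    ring
  have hVw : ∀ θ, ⟪w, V θ⟫ = sin θ := by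
    intro θ
    show ⟪w, cos θ • u + sin θ • w⟫ = _
    rw [inner_add_right, real_inner_smul_right, real_inner_smul_right, hww,
      real_inner_comm u w, hwu]
    ring
  have hVd : ∀ θ, ⟪V θ, d⟫ = 0 := by
    intro θ
    rw [hVin, hud, real_inner_comm, hwd]
    ring
  have hVV : ∀ θ, ⟪V θ, V θ⟫ = 1 := by
    intro θ
    rw [hVin, hVu, hVw, ← sin_sq_add_cos_sq θ]
    ring
  have hVnorm : ∀ θ, ‖V θ‖ = 1 := by
    intro θ
    have h := hVV θ
    rw [real_inner_self_eq_norm_mul_norm] at h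
    nlinarith [norm_nonneg (V θ)]
  have hVneg : ∀ θ, V (θ + π) = -V θ := by
    intro θ
    show cos (θ + π) • u + sin (θ + π) • w = -(cos θ • u + sin θ • w)
    rw [Real.cos_add_pi, Real.sin_add_pi]
    module
  have hV0 : V 0 = u := by
    show cos 0 • u + sin 0 • w = u
    rw [Real.cos_zero, Real.sin_zero, one_smul, zero_smul, add_zero]
  -- the support predicate
  set P : ℝ → Prop := fun θ => ∀ b ∈ B, ⟪V θ, b - p⟫ ≤ 0 with hP_set
  have hP_def : ∀ θ, P θ ↔ ∀ b ∈ B, ⟪V θ, b - p⟫ ≤ 0 := fun θ => Iff.rfl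
  -- no two antipodal support directions
  have hPneg : ∀ θ, P θ → P (θ + π) → False := by
    intro θ h1 h2
    rw [hP_def] at h1 h2
    obtain ⟨ε, hε, hball⟩ := Metric.mem_nhds_iff.mp (mem_interior_iff_mem_nhds.mp hx₀)
    have hy : x₀ + (ε/2) • V θ ∈ B := by
      apply hball
      rw [Metric.mem_ball, dist_eq_norm]
      have : x₀ + (ε/2) • V θ - x₀ = (ε/2) • V θ := by abel
      rw [this, norm_smul, hVnorm, mul_one, Real.norm_eq_abs,
        abs_of_pos (by linarith : (0:ℝ) < ε/2)]
      linarith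
    have hA := h1 _ hy
    have hB' := h2 _ hx₀B
    rw [hVneg, inner_neg_left] at hB'
    have hsplit : x₀ + (ε/2) • V θ - p = (x₀ - p) + (ε/2) • V θ := by abel
    rw [hsplit, inner_add_right, real_inner_smul_right, hVV] at hA
    have : (0:ℝ) ≤ ⟪V θ, x₀ - p⟫ := by linarith
    linarith
  -- uniform bound on inner products with B - p
  obtain ⟨R, hR⟩ := hBc.isBounded.subset_closedBall 0
  set K : ℝ := |R| + ‖p‖ + 1 with hK_def
  have hKpos : 0 < K := by positivity
  have hKb : ∀ φ : ℝ, ∀ b ∈ B, |⟪V φ, b - p⟫| ≤ K := by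
    intro φ b hb
    have h1 : |⟪V φ, b - p⟫| ≤ ‖V φ‖ * ‖b - p‖ := abs_real_inner_le_norm _ _
    have h2 : ‖b - p‖ ≤ ‖b‖ + ‖p‖ := norm_sub_le _ _
    have h3 : ‖b‖ ≤ R := by
      have := hR hb
      rwa [Metric.mem_closedBall, dist_zero_right] at this
    have h4 : R ≤ |R| := le_abs_self R
    rw [hVnorm, one_mul] at h1
    rw [hK_def]
    linarith
  -- a strict support direction remains supporting in a neighbourhood
  have hmarg : ∀ (θ₀ m' : ℝ), 0 < m' → (∀ b ∈ B, ⟪V θ₀, b - p⟫ ≤ -m') →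
      ∃ δ : ℝ, 0 < δ ∧ δ ≤ π/4 ∧ ∀ θ, |θ - θ₀| ≤ δ → P θ := by
    intro θ₀ m' hm' hmar
    refine ⟨min (π/4) (m' / (2*K)), ?_, min_le_left _ _, ?_⟩
    · apply lt_min (by linarith)
      positivity
    · intro θ hθ
      rw [hP_def]
      intro b hb
      have hident : ⟪V θ, b - p⟫ =
          cos (θ - θ₀) * ⟪V θ₀, b - p⟫ + sin (θ - θ₀) * ⟪V (θ₀ + π/2), b - p⟫ := by
        rw [hVin, hVin, hVin, Real.cos_add_pi_div_two, Real.sin_add_pi_div_two,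
          Real.cos_sub, Real.sin_sub]
        have hpy : sin θ₀ ^ 2 + cos θ₀ ^ 2 = 1 := Real.sin_sq_add_cos_sq θ₀
        linear_combination (-(cos θ * (inner ℝ u (b - p) : ℝ) +
          sin θ * (inner ℝ w (b - p) : ℝ))) * hpy
      set Δ := θ - θ₀ with hΔ
      have hΔ4 : |Δ| ≤ π/4 := le_trans hθ (min_le_left _ _)
      have hΔm : |Δ| ≤ m' / (2*K) := le_trans hθ (min_le_right _ _)
      have hcos : (1:ℝ)/2 ≤ cos Δ := by
        rw [← Real.cos_abs]
        have h13 : |Δ| ≤ π/3 := by linarith [hΔ4, hπ]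
        have := Real.cos_le_cos_of_nonneg_of_le_pi (abs_nonneg Δ) (by linarith) h13
        rwa [Real.cos_pi_div_three] at this
      have hsin : |sin Δ| ≤ m' / (2*K) := le_trans (Real.abs_sin_le_abs) hΔm
      have ht1 : cos Δ * ⟪V θ₀, b - p⟫ ≤ (1/2) * (-m') := by
        have h5 := hmar b hb
        nlinarith
      have ht2 : sin Δ * ⟪V (θ₀ + π/2), b - p⟫ ≤ m' / 2 := by
        have h6 := hKb (θ₀ + π/2) b hb
        calc sin Δ * ⟪V (θ₀ + π/2), b - p⟫ ≤ |sin Δ * ⟪V (θ₀ + π/2), b - p⟫| := le_abs_self _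
          _ = |sin Δ| * |⟪V (θ₀ + π/2), b - p⟫| := abs_mul _ _
          _ ≤ (m' / (2*K)) * K := by
              apply mul_le_mul hsin h6 (abs_nonneg _)
              positivity
          _ = m' / 2 := by field_simp
      rw [hident]
      linarith
  -- support directions form an "arc": positive combinations
  have hcone : ∀ θ θ'' θ' : ℝ, θ ≤ θ'' → θ'' ≤ θ' → θ' - θ < π → P θ → P θ' → P θ'' := by
    intro θ θ'' θ' h1 h2 h3 hPθ hPθ'
    rcases eq_or_lt_of_le (le_trans h1 h2) with heq | hlt
    · have : θ'' = θ := le_antisymm (heq ▸ h2) h1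
      rwa [this]
    rw [hP_def] at hPθ hPθ' ⊢
    intro b hb
    have hsΔ : 0 < sin (θ' - θ) := Real.sin_pos_of_pos_of_lt_pi (by linarith) h3
    have hident : sin (θ' - θ) * ⟪V θ'', b - p⟫ =
        sin (θ' - θ'') * ⟪V θ, b - p⟫ + sin (θ'' - θ) * ⟪V θ', b - p⟫ := by
      rw [hVin, hVin, hVin, Real.sin_sub, Real.sin_sub, Real.sin_sub]
      ring
    have hs1 : 0 ≤ sin (θ' - θ'') :=
      Real.sin_nonneg_of_nonneg_of_le_pi (by linarith) (by linarith)
    have hs2 : 0 ≤ sin (θ'' - θ) :=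
      Real.sin_nonneg_of_nonneg_of_le_pi (by linarith) (by linarith)
    nlinarith [hPθ b hb, hPθ' b hb, mul_nonneg hs1 (neg_nonneg.2 (hPθ b hb)),
      mul_nonneg hs2 (neg_nonneg.2 (hPθ' b hb))]
  have hP0m : ∀ b ∈ B, ⟪V 0, b - p⟫ ≤ -m := by
    rw [hV0]; exact huB
  have hP0 : P 0 := by
    rw [hP_def]; intro b hb; linarith [hP0m b hb]
  -- orthogonal to u and w means parallel to d
  have hspan : ∀ c : E3, ⟪u, c⟫ = 0 → ⟪w, c⟫ = 0 → ∃ t : ℝ, c = t • d := by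
    intro c hcu hcw
    set dh : E3 := ‖d‖⁻¹ • d with hdh_def
    have hdh1 : ‖dh‖ = 1 := by
      rw [hdh_def, norm_smul, norm_inv, norm_norm, inv_mul_cancel₀ hdn]
    have hdhu : ⟪dh, u⟫ = 0 := by
      rw [hdh_def, real_inner_smul_left, real_inner_comm, hud, mul_zero]
    have hdhw : ⟪dh, w⟫ = 0 := by
      rw [hdh_def, real_inner_smul_left, hwd, mul_zero]
    have hdhdh : ⟪dh, dh⟫ = 1 := by
      rw [real_inner_self_eq_norm_sq, hdh1]; norm_num
    set t' : ℝ := ⟪dh, c⟫ with ht'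
    set z : E3 := c - t' • dh with hz
    have hz1 : ⟪dh, z⟫ = 0 := by
      rw [hz, inner_sub_right, real_inner_smul_right, hdhdh, mul_one, sub_self]
    have hz2 : ⟪u, z⟫ = 0 := by
      rw [hz, inner_sub_right, real_inner_smul_right, hcu, real_inner_comm dh u, hdhu]
      ring
    have hz3 : ⟪w, z⟫ = 0 := by
      rw [hz, inner_sub_right, real_inner_smul_right, hcw, real_inner_comm dh w, hdhw]
      ring
    have hz0 : z = 0 := aux_orth4 dh u w z hdh1 hu1 hw1 hdhu hdhw hwu hz1 hz2 hz3
    refine ⟨t' * ‖d‖⁻¹, ?_⟩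
    have : c = t' • dh := by
      have := sub_eq_zero.mp (hz ▸ hz0)
      exact this
    rw [this, hdh_def, smul_smul]
  ----------------------------------------------------------------
  -- the arc of supporting directions
  set Θ : Set ℝ := {θ | θ ∈ Icc (-π) π ∧ P θ} with hΘ_def
  have hΘsub : Θ ⊆ Icc (-π) π := fun θ hθ => hθ.1
  have hΘclosed : IsClosed Θ := by
    have : Θ = Icc (-π) π ∩ ⋂ b ∈ B, {θ : ℝ | ⟪V θ, b - p⟫ ≤ 0} := by
      ext θ
      simp only [hΘ_def, Set.mem_setOf_eq, Set.mem_inter_iff, Set.mem_iInter, hP_def]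
    rw [this]
    refine isClosed_Icc.inter (isClosed_biInter fun b _ => ?_)
    apply isClosed_le _ continuous_const
    have : (fun θ => ⟪V θ, b - p⟫) = fun θ => cos θ * ⟪u, b - p⟫ + sin θ * ⟪w, b - p⟫ := by
      funext θ; exact hVin θ _
    rw [this]
    exact (Real.continuous_cos.mul continuous_const).add
      (Real.continuous_sin.mul continuous_const)
  have hΘne : Θ.Nonempty := ⟨0, ⟨by constructor <;> linarith, hP0⟩⟩
  have hΘbdd : BddBelow Θ ∧ BddAbove Θ :=
    ⟨⟨-π, fun θ hθ => (hΘsub hθ).1⟩, ⟨π, fun θ hθ => (hΘsub hθ).2⟩⟩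
  set a : ℝ := sInf Θ with ha_def
  set b : ℝ := sSup Θ with hb_def
  have haΘ : a ∈ Θ := hΘclosed.csInf_mem hΘne hΘbdd.1
  have hbΘ : b ∈ Θ := hΘclosed.csSup_mem hΘne hΘbdd.2
  have hab : a ≤ b := csInf_le_csSup hΘne hΘbdd.1 hΘbdd.2
  have hagt : -π < a := by
    rcases lt_or_eq_of_le (hΘsub haΘ).1 with h | h
    · exact h
    · exfalso
      have hPa : P (-π) := by rw [h]; exact haΘ.2
      exact hPneg (-π) hPa (by rw [neg_add_cancel]; exact hP0)
  have hblt : b < π := by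
    rcases lt_or_eq_of_le (hΘsub hbΘ).2 with h | h
    · exact h
    · exfalso
      exact hPneg 0 hP0 (by rw [zero_add, ← h]; exact hbΘ.2)
  obtain ⟨δ₀, hδ₀pos, hδ₀le, hδ₀⟩ := hmarg 0 m hmpos hP0m
  have hδΘ : ∀ θ : ℝ, |θ| ≤ δ₀ → θ ∈ Θ := by
    intro θ hθ
    have h4 : δ₀ < π := by linarith
    have := abs_le.mp hθ
    exact ⟨⟨by linarith, by linarith⟩, hδ₀ θ (by simpa using hθ)⟩
  have haneg : a ≤ -δ₀ := csInf_le hΘbdd.1 (hδΘ (-δ₀) (by rw [abs_neg, abs_of_pos hδ₀pos]))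
  have hbpos : δ₀ ≤ b := le_csSup hΘbdd.2 (hδΘ δ₀ (by rw [abs_of_pos hδ₀pos]))
  have haltb : a < b := by linarith
  -- everything between a and b is a supporting direction
  have hint : ∀ θ, a ≤ θ → θ ≤ b → P θ := by
    intro θ h1 h2
    rcases le_or_gt θ 0 with h3 | h3
    · exact hcone a θ 0 h1 h3 (by linarith) haΘ.2 hP0
    · exact hcone 0 θ b (le_of_lt h3) h2 (by linarith) hP0 hbΘ.2
  -- boundary of the arc touches B
  have hQend : ∀ θ₀, θ₀ ∈ Θ → (∀ c ∈ B, ⟪V θ₀, c - p⟫ ≠ 0) →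
      ∃ δ : ℝ, 0 < δ ∧ δ ≤ π/4 ∧ ∀ θ, |θ - θ₀| ≤ δ → P θ := by
    intro θ₀ hθ₀ hne
    have hcont : ContinuousOn (fun c : E3 => ⟪V θ₀, c - p⟫) B := by
      apply Continuous.continuousOn
      exact (continuous_const.inner (continuous_id.sub continuous_const))
    obtain ⟨c₀, hc₀B, hc₀max⟩ := hBc.exists_isMaxOn hBne hcont
    have hc₀neg : ⟪V θ₀, c₀ - p⟫ < 0 :=
      lt_of_le_of_ne ((hP_def θ₀).mp hθ₀.2 c₀ hc₀B) (hne c₀ hc₀B)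
    exact hmarg θ₀ (-⟪V θ₀, c₀ - p⟫) (by linarith) (fun c hc => by
      have := hc₀max hc
      simp only [Set.mem_setOf_eq] at this
      linarith [this])
  have hQa : ∃ c ∈ B, ⟪V a, c - p⟫ = 0 := by
    by_contra hcon
    push_neg at hcon
    obtain ⟨δ, hδpos, hδle, hδP⟩ := hQend a haΘ hcon
    set θ' : ℝ := a - min δ ((a + π)/2) with hθ'
    have hmin : 0 < min δ ((a + π)/2) := lt_min hδpos (by linarith)
    have hθ'Θ : θ' ∈ Θ := by
      refine ⟨⟨?_, ?_⟩, hδP θ' ?_⟩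
      · have : min δ ((a + π)/2) ≤ (a + π)/2 := min_le_right _ _
        rw [hθ']; linarith
      · rw [hθ']; linarith [(hΘsub haΘ).2]
      · rw [hθ']
        have h5 : a - min δ ((a + π)/2) - a = -(min δ ((a + π)/2)) := by ring
        rw [h5, abs_neg, abs_of_pos hmin]
        exact min_le_left _ _
    have := csInf_le hΘbdd.1 hθ'Θ
    rw [← ha_def] at this
    rw [hθ'] at this
    linarith
  have hQb : ∃ c ∈ B, ⟪V b, c - p⟫ = 0 := by
    by_contra hcon
    push_neg at hcon
    obtain ⟨δ, hδpos, hδle, hδP⟩ := hQend b hbΘ hcon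
    set θ' : ℝ := b + min δ ((π - b)/2) with hθ'
    have hmin : 0 < min δ ((π - b)/2) := lt_min hδpos (by linarith)
    have hθ'Θ : θ' ∈ Θ := by
      refine ⟨⟨?_, ?_⟩, hδP θ' ?_⟩
      · rw [hθ']; linarith [(hΘsub hbΘ).1]
      · have : min δ ((π - b)/2) ≤ (π - b)/2 := min_le_right _ _
        rw [hθ']; linarith
      · rw [hθ']
        have h5 : b + min δ ((π - b)/2) - b = min δ ((π - b)/2) := by ring
        rw [h5, abs_of_pos hmin]
        exact min_le_left _ _
    have := le_csSup hΘbdd.2 hθ'Θ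
    rw [← hb_def] at this
    rw [hθ'] at this
    linarith
  -- interior of the arc does not touch B
  have hinterior : ∀ θ, a < θ → θ < b → ∀ c ∈ B, ⟪V θ, c - p⟫ ≠ 0 := by
    intro θ hθa hθb c hc hczero
    set A : ℝ := ⟪u, c - p⟫ with hA
    set Bc : ℝ := ⟪w, c - p⟫ with hBc'
    have hE : A * cos θ + Bc * sin θ = 0 := by
      rw [hVin] at hczero; linarith [hczero]
    set D : ℝ := -A * sin θ + Bc * cos θ with hD
    rcases eq_or_ne D 0 with hD0 | hD0
    · have hpy := Real.sin_sq_add_cos_sq θ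
      rw [hD] at hD0
      have hA0 : A = 0 := by linear_combination cos θ * hE - sin θ * hD0 - A * hpy
      have hB0 : Bc = 0 := by linear_combination sin θ * hE + cos θ * hD0 - Bc * hpy
      obtain ⟨t, ht⟩ := hspan (c - p) (by rw [← hA]; exact hA0) (by rw [← hBc']; exact hB0)
      have hcp : p + t • d = c := by rw [← ht]; abel
      exact hLB t (hcp ▸ hc)
    · rcases lt_or_gt_of_ne hD0 with hDneg | hDpos
      · set ε : ℝ := min ((θ - a)/2) (π/2) with hε
        have hεpos : 0 < ε := lt_min (by linarith) (by linarith)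
        have hειπ : ε < π := lt_of_le_of_lt (min_le_right _ _) (by linarith)
        have hsin : 0 < sin ε := Real.sin_pos_of_pos_of_lt_pi hεpos hειπ
        have hPθ' : P (θ - ε) := by
          apply hint <;> [skip; skip] <;>
            [ (have := min_le_left ((θ - a)/2) (π/2 : ℝ); rw [← hε] at this; linarith);
              linarith]
        have hval : ⟪V (θ - ε), c - p⟫ = -D * sin ε := by
          rw [hVin, Real.cos_sub, Real.sin_sub, ← hA, ← hBc', hD]
          linear_combination cos ε * hE
        have := (hP_def _).mp hPθ' c hc
        rw [hval] at this
        nlinarith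
      · set ε : ℝ := min ((b - θ)/2) (π/2) with hε
        have hεpos : 0 < ε := lt_min (by linarith) (by linarith)
        have hειπ : ε < π := lt_of_le_of_lt (min_le_right _ _) (by linarith)
        have hsin : 0 < sin ε := Real.sin_pos_of_pos_of_lt_pi hεpos hειπ
        have hPθ' : P (θ + ε) := by
          apply hint
          · linarith
          · have := min_le_left ((b - θ)/2) (π/2 : ℝ); rw [← hε] at this; linarith
        have hval : ⟪V (θ + ε), c - p⟫ = D * sin ε := by
          rw [hVin, Real.cos_add, Real.sin_add, ← hA, ← hBc', hD]
          linear_combination cos ε * hE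
        have := (hP_def _).mp hPθ' c hc
        rw [hval] at this
        nlinarith
  have hΘ_mem : ∀ θ : ℝ, θ ∈ Θ ↔ (θ ∈ Icc (-π) π ∧ P θ) := fun θ => Iff.rfl
  clear_value d u₀ m K V P Θ a b
  ----------------------------------------------------------------
  -- translation to the support-function formulation
  have himgne : ∀ v : E3, ((fun b => (inner ℝ v b : ℝ)) '' B).Nonempty :=
    fun v => hBne.image _
  have himgbdd : ∀ v : E3, BddAbove ((fun b => (inner ℝ v b : ℝ)) '' B) := by
    intro v
    exact (hBc.image (continuous_const.inner continuous_id)).bddAbove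
  have hFeq : ∀ v : E3,
      ((∀ c ∈ B, ⟪v, c - p⟫ ≤ 0) ∧ (∃ c ∈ B, ⟪v, c - p⟫ = 0)) ↔
        (inner ℝ v p : ℝ) = sSup ((fun b => (inner ℝ v b : ℝ)) '' B) := by
    intro v
    constructor
    · rintro ⟨hPv, c, hcB, hc0⟩
      have hle : sSup ((fun b => (inner ℝ v b : ℝ)) '' B) ≤ ⟪v, p⟫ := by
        apply csSup_le (himgne v)
        rintro r ⟨b, hb, rfl⟩
        have := hPv b hb
        rw [inner_sub_right] at this
        linarith
      have hge : (inner ℝ v p : ℝ) ≤ sSup ((fun b => (inner ℝ v b : ℝ)) '' B) := by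
        have hvc : (inner ℝ v c : ℝ) = ⟪v, p⟫ := by
          rw [inner_sub_right] at hc0
          linarith
        rw [← hvc]
        exact le_csSup (himgbdd v) (Set.mem_image_of_mem _ hcB)
      linarith
    · intro h
      constructor
      · intro c hc
        rw [inner_sub_right]
        have : (inner ℝ v c : ℝ) ≤ sSup ((fun b => (inner ℝ v b : ℝ)) '' B) :=
          le_csSup (himgbdd v) (Set.mem_image_of_mem _ hc)
        linarith [h, this]
      · have hcont : ContinuousOn (fun c : E3 => (inner ℝ v c : ℝ)) B :=
          (continuous_const.inner continuous_id).continuousOn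
        obtain ⟨c₀, hc₀B, hc₀max⟩ := hBc.exists_isMaxOn hBne hcont
        refine ⟨c₀, hc₀B, ?_⟩
        have hgr : IsGreatest ((fun b => (inner ℝ v b : ℝ)) '' B) (inner ℝ v c₀ : ℝ) := by
          constructor
          · exact Set.mem_image_of_mem _ hc₀B
          · rintro r ⟨b, hb, rfl⟩
            exact hc₀max hb
        have := hgr.csSup_eq
        rw [inner_sub_right, ← this, ← h, sub_self]
  -- decomposition of unit vectors orthogonal to d
  have hdecomp : ∀ v : E3, ‖v‖ = 1 → ⟪v, d⟫ = 0 →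
      ∃ θ : ℝ, θ ∈ Ioc (-π) π ∧ V θ = v := by
    intro v hv1 hvd
    obtain ⟨x, hx⟩ : ∃ x : ℝ, x = ⟪u, v⟫ := ⟨_, rfl⟩
    obtain ⟨y, hy⟩ : ∃ y : ℝ, y = ⟪w, v⟫ := ⟨_, rfl⟩
    set z : E3 := v - (x • u + y • w) with hz
    set dh : E3 := ‖d‖⁻¹ • d with hdh_def
    have hdh1 : ‖dh‖ = 1 := by
      rw [hdh_def, norm_smul, norm_inv, norm_norm, inv_mul_cancel₀ hdn]
    have hdhu : ⟪dh, u⟫ = 0 := by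
      rw [hdh_def, real_inner_smul_left, real_inner_comm, hud, mul_zero]
    have hdhw : ⟪dh, w⟫ = 0 := by
      rw [hdh_def, real_inner_smul_left, hwd, mul_zero]
    have hz1 : ⟪dh, z⟫ = 0 := by
      rw [hz, inner_sub_right, inner_add_right, real_inner_smul_right,
        real_inner_smul_right, hdhu, hdhw]
      rw [hdh_def, real_inner_smul_left, real_inner_comm, hvd]
      ring
    have hz2 : ⟪u, z⟫ = 0 := by
      rw [hz, inner_sub_right, inner_add_right, real_inner_smul_right,
        real_inner_smul_right, huu, hwu, ← hx]
      ring
    have hz3 : ⟪w, z⟫ = 0 := by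
      rw [hz, inner_sub_right, inner_add_right, real_inner_smul_right,
        real_inner_smul_right, hww, real_inner_comm u w, hwu, ← hy]
      ring
    have hz0 : z = 0 := aux_orth4 dh u w z hdh1 hu1 hw1 hdhu hdhw hwu hz1 hz2 hz3
    have hvxy : v = x • u + y • w := by
      rw [hz] at hz0
      exact sub_eq_zero.mp hz0
    have hxy1 : x^2 + y^2 = 1 := by
      have h1 : ⟪v, v⟫ = 1 := by
        rw [real_inner_self_eq_norm_sq, hv1]; norm_num
      have hvu : ⟪v, u⟫ = x := by rw [hx]; exact real_inner_comm u v
      have hvw : ⟪v, w⟫ = y := by rw [hy]; exact real_inner_comm w v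
      nth_rewrite 2 [hvxy] at h1
      rw [inner_add_right, real_inner_smul_right, real_inner_smul_right, hvu, hvw] at h1
      linear_combination h1
    -- find the angle
    set zc : ℂ := x + y * Complex.I with hzc
    have habs : ‖zc‖ = 1 := by
      rw [hzc, Complex.norm_def, Complex.normSq_add_mul_I, hxy1]
      exact Real.sqrt_one
    have hzc0 : zc ≠ 0 := by
      intro h
      rw [h] at habs
      simp at habs
    refine ⟨Complex.arg zc, ⟨Complex.neg_pi_lt_arg _, Complex.arg_le_pi _⟩, ?_⟩
    have hcx : cos (Complex.arg zc) = x := by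
      rw [Complex.cos_arg hzc0, habs]
      simp [hzc]
    have hsy : sin (Complex.arg zc) = y := by
      rw [Complex.sin_arg, habs]
      simp [hzc]
    rw [hV_def]
    show cos (Complex.arg zc) • u + sin (Complex.arg zc) • w = v
    rw [hcx, hsy, ← hvxy]
  ----------------------------------------------------------------
  -- the target set equals {V a, V b}
  have hSab : {v : E3 | ‖v‖ = 1 ∧
      (inner ℝ v p : ℝ) = sSup ((fun b => (inner ℝ v b : ℝ)) '' B) ∧
      (inner ℝ v q : ℝ) = sSup ((fun b => (inner ℝ v b : ℝ)) '' B)} = {V a, V b} := by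
    ext v
    simp only [Set.mem_setOf_eq, Set.mem_insert_iff, Set.mem_singleton_iff]
    constructor
    · rintro ⟨hv1, hvp, hvq⟩
      have hvd : ⟪v, d⟫ = 0 := by
        rw [hd_def, inner_sub_right, hvp, hvq, sub_self]
      obtain ⟨θ, hθmem, hθv⟩ := hdecomp v hv1 hvd
      obtain ⟨hPv, hQv⟩ := (hFeq v).mpr hvp
      have hθΘ : θ ∈ Θ := by
        have hθmem' := Set.mem_Ioc.mp hθmem
        refine (hΘ_mem θ).mpr ⟨⟨le_of_lt hθmem'.1, hθmem'.2⟩, ?_⟩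
        rw [hP_def, hθv]
        exact hPv
      have hθa : a ≤ θ := by rw [ha_def]; exact csInf_le hΘbdd.1 hθΘ
      have hθb : θ ≤ b := by rw [hb_def]; exact le_csSup hΘbdd.2 hθΘ
      rcases eq_or_lt_of_le hθa with h | h
      · left; rw [← hθv, ← h]
      rcases eq_or_lt_of_le hθb with h' | h'
      · right; rw [← hθv, h']
      exfalso
      obtain ⟨c, hcB, hc0⟩ := hQv
      exact hinterior θ h h' c hcB (by rw [hθv]; exact hc0)
    · intro hv
      have hmain : ∀ θ₀, θ₀ ∈ Θ → (∃ c ∈ B, ⟪V θ₀, c - p⟫ = 0) →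
          ‖V θ₀‖ = 1 ∧
          (inner ℝ (V θ₀) p : ℝ) = sSup ((fun b => (inner ℝ (V θ₀) b : ℝ)) '' B) ∧
          (inner ℝ (V θ₀) q : ℝ) = sSup ((fun b => (inner ℝ (V θ₀) b : ℝ)) '' B) := by
        intro θ₀ hθ₀ hQ
        obtain ⟨hθ₀icc, hθ₀P⟩ := (hΘ_mem θ₀).mp hθ₀
        have hp_eq : (inner ℝ (V θ₀) p : ℝ) = sSup ((fun b => (inner ℝ (V θ₀) b : ℝ)) '' B) :=
          (hFeq (V θ₀)).mp ⟨(hP_def θ₀).mp hθ₀P, hQ⟩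
        refine ⟨hVnorm θ₀, hp_eq, ?_⟩
        have : (inner ℝ (V θ₀) q : ℝ) = ⟪V θ₀, p⟫ := by
          have h0 := hVd θ₀
          rw [hd_def, inner_sub_right] at h0
          linarith
        rw [this, hp_eq]
      rcases hv with h | h <;> rw [h]
      · exact hmain a haΘ hQa
      · exact hmain b hbΘ hQb
  rw [hSab]
  apply Set.ncard_pair
  -- V a ≠ V b
  intro hVab
  have hca : cos a = cos b := by
    rw [← hVu a, ← hVu b, hVab]
  have hsa : sin a = sin b := by
    rw [← hVw a, ← hVw b, hVab]
  have hcos1 : cos (b - a) = 1 := by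
    rw [Real.cos_sub, hca, hsa]
    linear_combination Real.sin_sq_add_cos_sq b
  have hba : b - a = 0 := by
    have h1 : -(2*π) < b - a := by linarith
    have h2 : b - a < 2*π := by linarith
    exact (Real.cos_eq_one_iff_of_lt_of_lt h1 h2).mp hcos1
  linarith
end

section
/- Let f : ℕ → ℝ satisfy f(1) = 0 and, for every integer i ≥ 2, f(i) = 1 + (1/(i−1)) · ∑_{k=1}^{i−1} f(k). Then for every integer i ≥ 2 one has f(i) ≤ 2·ln(i). -/
/-- If `f : ℕ → ℝ` satisfies `f 1 = 0` and, for every `i ≥ 2`,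
`f i = 1 + (1/(i-1)) · ∑_{k=1}^{i-1} f k`, then `f i ≤ 2 · ln i` for every `i ≥ 2`. -/
theorem stmt_8 (f : ℕ → ℝ) (h1 : f 1 = 0)
    (hrec : ∀ i : ℕ, 2 ≤ i →
      f i = 1 + (1 / ((i : ℝ) - 1)) * ∑ k ∈ Finset.Icc 1 (i - 1), f k) :
    ∀ i : ℕ, 2 ≤ i → f i ≤ 2 * Real.log i := by
  -- Step recurrence: f (n+1) = f n + 1/n for n ≥ 2
  have step : ∀ n : ℕ, 2 ≤ n → f (n + 1) = f n + 1 / n := by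
    intro n hn
    obtain ⟨m, rfl⟩ : ∃ m, n = m + 1 := ⟨n - 1, by omega⟩
    have hm : 1 ≤ m := by omega
    have hm0 : (0 : ℝ) < m := by exact_mod_cast Nat.pos_of_ne_zero (by omega)
    have hA := hrec (m + 1) (by omega)
    have hB := hrec (m + 2) (by omega)
    simp only [Nat.add_sub_cancel] at hA
    have hsub : (m + 2) - 1 = m + 1 := by omega
    rw [hsub] at hB
    rw [Finset.sum_Icc_succ_top (by omega : 1 ≤ m + 1)] at hB
    have hS : ∑ k ∈ Finset.Icc 1 m, f k = (m : ℝ) * (f (m + 1) - 1) := by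
      have : ((m : ℝ) + 1) - 1 = (m : ℝ) := by ring
      rw [Nat.cast_add, Nat.cast_one, this] at hA
      field_simp at hA
      linarith
    rw [hS] at hB
    have h2 : ((m : ℝ) + 2) - 1 = (m : ℝ) + 1 := by ring
    rw [Nat.cast_add, Nat.cast_ofNat, h2] at hB
    rw [hB]
    have hm1 : (0 : ℝ) < (m : ℝ) + 1 := by linarith
    push_cast
    field_simp
    ring
  intro i hi
  induction i, hi using Nat.le_induction with
  | base =>
    have hf2 : f 2 = 1 := by
      have := hrec 2 le_rfl
      norm_num [Finset.Icc_self, h1] at this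
      linarith
    have hlog : (0.6931471803 : ℝ) < Real.log 2 := Real.log_two_gt_d9
    rw [hf2]
    norm_num
    linarith
  | succ n hn ih =>
    have hn0 : (0 : ℝ) < n := by exact_mod_cast Nat.pos_of_ne_zero (by omega)
    have hstep := step n hn
    rw [hstep]
    -- log (n+1) - log n ≥ 1/(n+1)
    have hx : (0 : ℝ) < (n : ℝ) / ((n : ℝ) + 1) := by positivity
    have hlog := Real.log_le_sub_one_of_pos hx
    rw [Real.log_div (by linarith) (by linarith)] at hlog
    have hkey : 1 / ((n : ℝ) + 1) ≤ Real.log ((n : ℝ) + 1) - Real.log n := by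
      have : (n : ℝ) / ((n : ℝ) + 1) - 1 = -(1 / ((n : ℝ) + 1)) := by
        field_simp
        ring
      linarith [this ▸ hlog]
    have h12 : 1 / (n : ℝ) ≤ 2 / ((n : ℝ) + 1) := by
      rw [div_le_div_iff₀ hn0 (by linarith)]
      have : (2 : ℝ) ≤ n := by exact_mod_cast hn
      linarith
    have : ((n : ℕ) + 1 : ℝ) = (n : ℝ) + 1 := by push_cast; ring
    have h2k : 2 / ((n : ℝ) + 1) = 2 * (1 / ((n : ℝ) + 1)) := by ring
    push_cast
    linarith
end
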